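/- arXiv:1905.05157 — 2 statements merged into one kernel-verified Lean document; each statement's English description precedes it below -/
import Mathlib

section
/- Let P be a probability vector p ∈ R^n with all p_i > 0, supported on distinct atoms a₁ < ⋯ < a_n, and let Q be a probability vector q ∈ R^{n+1} with all q_j > 0, supported on distinct atoms b₁ < ⋯ < b_{n+1}, such that there exists an n×(n+1) row-stochastic matrix F with pF = q and (p∘a)F = q∘b (componentwise products). Then there exist row-stochastic n×(n+1) matrices F′ and F″, each having at least one zero column, and α ∈ (0,1), such that F = αF′ + (1-α)F″, pF′ and pF″ are probability vectors supported on at most n of the atoms b_j, and both (F′, F″) satisfy the mean-preservation conditions: ((p∘a)F′)_j = b_j (pF′)_j and ((p∘a)F″)_j = b_j (pF″)_j for all j. -/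
open Finset

def RowStochastic {n m : ℕ} (F : Matrix (Fin n) (Fin m) ℝ) : Prop :=
  (∀ i j, 0 ≤ F i j) ∧ ∀ i, ∑ j, F i j = 1

theorem main_decomposition (n : ℕ) (hn : 2 ≤ n)
    (p : Fin n → ℝ) (hp : ∀ i, 0 < p i) (hp_sum : ∑ i, p i = 1)
    (a : Fin n → ℝ) (ha : StrictMono a)
    (q : Fin (n + 1) → ℝ) (hq : ∀ j, 0 < q j) (hq_sum : ∑ j, q j = 1)
    (b : Fin (n + 1) → ℝ) (hb : StrictMono b)
    (F : Matrix (Fin n) (Fin (n + 1)) ℝ) (hF : RowStochastic F)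
    (hFq : ∀ j, ∑ i, p i * F i j = q j)
    (hFmean : ∀ j, ∑ i, p i * a i * F i j = q j * b j) :
    ∃ (F' F'' : Matrix (Fin n) (Fin (n + 1)) ℝ) (α : ℝ),
      0 < α ∧ α < 1 ∧
      RowStochastic F' ∧ RowStochastic F'' ∧
      (∃ j, ∀ i, F' i j = 0) ∧ (∃ j, ∀ i, F'' i j = 0) ∧
      (∀ i j, F i j = α * F' i j + (1 - α) * F'' i j) ∧
      ((univ.filter fun j => ∑ i, p i * F' i j ≠ 0).card ≤ n) ∧
      ((univ.filter fun j => ∑ i, p i * F'' i j ≠ 0).card ≤ n) ∧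
      (∀ j, ∑ i, p i * a i * F' i j = b j * ∑ i, p i * F' i j) ∧
      (∀ j, ∑ i, p i * a i * F'' i j = b j * ∑ i, p i * F'' i j) := by
  classical
  -- the n+1 columns of F are linearly dependent in ℝⁿ
  set v : Fin (n + 1) → (Fin n → ℝ) := fun j i => F i j with hv
  have hnli : ¬ LinearIndependent ℝ v := by
    intro h
    have h1 := h.fintype_card_le_finrank
    rw [Module.finrank_fin_fun] at h1
    simp at h1
  obtain ⟨c, hcsum, j₀, hj₀⟩ := Fintype.not_linearIndependent_iff.mp hnli
  have hrow : ∀ i, ∑ j, c j * F i j = 0 := by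
    intro i
    have h2 := congrFun hcsum i
    simpa [v, Finset.sum_apply] using h2
  have hcq : ∑ j, c j * q j = 0 := by
    have h3 : ∑ j, c j * q j = ∑ i, p i * ∑ j, c j * F i j := by
      simp_rw [← hFq, Finset.mul_sum]
      rw [Finset.sum_comm]
      apply Finset.sum_congr rfl
      intro j _
      apply Finset.sum_congr rfl
      intro i _
      ring
    rw [h3]
    simp [hrow]
  obtain ⟨jm, hjm⟩ := Finite.exists_min c
  obtain ⟨jM, hjM⟩ := Finite.exists_max c
  set m := c jm with hmdef
  set M := c jM with hMdef
  have hM : 0 < M := by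
    by_contra h
    push_neg at h
    have hle : ∀ j ∈ univ, c j * q j ≤ 0 := fun j _ =>
      mul_nonpos_of_nonpos_of_nonneg ((hjM j).trans h) (hq j).le
    have h4 := (Finset.sum_eq_zero_iff_of_nonpos hle).mp hcq j₀ (mem_univ _)
    exact hj₀ (by
      rcases mul_eq_zero.mp h4 with h5 | h5
      · exact h5
      · exact absurd h5 (hq j₀).ne')
  have hm : m < 0 := by
    by_contra h
    push_neg at h
    have hle : ∀ j ∈ univ, 0 ≤ c j * q j := fun j _ =>
      mul_nonneg (h.trans (hjm j)) (hq j).le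
    have h4 := (Finset.sum_eq_zero_iff_of_nonneg hle).mp hcq j₀ (mem_univ _)
    exact hj₀ (by
      rcases mul_eq_zero.mp h4 with h5 | h5
      · exact h5
      · exact absurd h5 (hq j₀).ne')
  have hmne : m ≠ 0 := ne_of_lt hm
  have hMne : M ≠ 0 := ne_of_gt hM
  have hMm : M - m ≠ 0 := by linarith
  -- the two matrices and the coefficient
  refine ⟨fun i j => F i j * (1 - c j / m), fun i j => F i j * (1 - c j / M),
    -m / (M - m), ?_, ?_, ?_, ?_, ?_, ?_, ?_, ?_, ?_, ?_, ?_⟩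
  · exact div_pos (by linarith) (by linarith)
  · rw [div_lt_one (by linarith)]; linarith
  · constructor
    · intro i j
      apply mul_nonneg (hF.1 i j)
      have : c j / m ≤ 1 := by
        rw [div_le_one_of_neg hm]
        exact hjm j
      linarith
    · intro i
      have h5 : ∑ j, F i j * (1 - c j / m) = (∑ j, F i j) - (1/m) * ∑ j, c j * F i j := by
        rw [Finset.mul_sum, ← Finset.sum_sub_distrib]
        apply Finset.sum_congr rfl
        intro j _
        field_simp
      rw [h5, hF.2 i, hrow i]
      ring
  · constructor
    · intro i j
      apply mul_nonneg (hF.1 i j)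
      have : c j / M ≤ 1 := by
        rw [div_le_one hM]
        exact hjM j
      linarith
    · intro i
      have h5 : ∑ j, F i j * (1 - c j / M) = (∑ j, F i j) - (1/M) * ∑ j, c j * F i j := by
        rw [Finset.mul_sum, ← Finset.sum_sub_distrib]
        apply Finset.sum_congr rfl
        intro j _
        field_simp
      rw [h5, hF.2 i, hrow i]
      ring
  · refine ⟨jm, fun i => ?_⟩
    show F i jm * (1 - c jm / m) = 0
    rw [← hmdef, div_self hmne]
    ring
  · refine ⟨jM, fun i => ?_⟩
    show F i jM * (1 - c jM / M) = 0
    rw [← hMdef, div_self hMne]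
    ring
  · intro i j
    have hkey : (-m / (M - m)) * (1 - c j / m) + (1 - -m / (M - m)) * (1 - c j / M) = 1 := by
      field_simp
      ring
    calc F i j = F i j * ((-m / (M - m)) * (1 - c j / m) + (1 - -m / (M - m)) * (1 - c j / M)) := by
          rw [hkey]; ring
      _ = -m / (M - m) * (F i j * (1 - c j / m)) + (1 - -m / (M - m)) * (F i j * (1 - c j / M)) := by ring
  · have hsub : (univ.filter fun j => (∑ i, p i * (F i j * (1 - c j / m))) ≠ 0) ⊆ univ.erase jm := by
      intro j hj
      rw [Finset.mem_filter] at hj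
      rw [Finset.mem_erase]
      refine ⟨?_, mem_univ _⟩
      rintro rfl
      apply hj.2
      apply Finset.sum_eq_zero
      intro i _
      rw [← hmdef, div_self hmne]
      ring
    calc _ ≤ (univ.erase jm).card := Finset.card_le_card hsub
      _ = n := by rw [Finset.card_erase_of_mem (mem_univ _), Finset.card_univ, Fintype.card_fin]; omega
  · have hsub : (univ.filter fun j => (∑ i, p i * (F i j * (1 - c j / M))) ≠ 0) ⊆ univ.erase jM := by
      intro j hj
      rw [Finset.mem_filter] at hj
      rw [Finset.mem_erase]
      refine ⟨?_, mem_univ _⟩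
      rintro rfl
      apply hj.2
      apply Finset.sum_eq_zero
      intro i _
      rw [← hMdef, div_self hMne]
      ring
    calc _ ≤ (univ.erase jM).card := Finset.card_le_card hsub
      _ = n := by rw [Finset.card_erase_of_mem (mem_univ _), Finset.card_univ, Fintype.card_fin]; omega
  · intro j
    have h1 : ∑ i, p i * a i * (F i j * (1 - c j / m)) = (1 - c j / m) * ∑ i, p i * a i * F i j := by
      rw [Finset.mul_sum]; apply Finset.sum_congr rfl; intro i _; ring
    have h2 : ∑ i, p i * (F i j * (1 - c j / m)) = (1 - c j / m) * ∑ i, p i * F i j := by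
      rw [Finset.mul_sum]; apply Finset.sum_congr rfl; intro i _; ring
    rw [h1, h2, hFmean j, hFq j]
    ring
  · intro j
    have h1 : ∑ i, p i * a i * (F i j * (1 - c j / M)) = (1 - c j / M) * ∑ i, p i * a i * F i j := by
      rw [Finset.mul_sum]; apply Finset.sum_congr rfl; intro i _; ring
    have h2 : ∑ i, p i * (F i j * (1 - c j / M)) = (1 - c j / M) * ∑ i, p i * F i j := by
      rw [Finset.mul_sum]; apply Finset.sum_congr rfl; intro i _; ring
    rw [h1, h2, hFmean j, hFq j]
    ring
end

section
/- Let Q be an smpc of an n-atom measure P with support on m > n points. Then Q can be written as a finite convex combination ∑_k α_k Q_k where each Q_k is an smpc of P with support on at most n points, α_k > 0, and ∑_k α_k = 1. -/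
open Finset

/-!
If more than `n` columns of `F` carry mass, they are linearly dependent in `ℝⁿ`: some `t ≠ 0`
supported on them has `F t = 0`. Rescaling column `j` by `1 + ε t j` keeps the rows stochastic
and preserves each column's mean; since `∑ j, t j q j = 0`, the vector `t` takes both signs, so `ε`
can be pushed in either direction until a column dies. Thus `F` lies on a segment between two
smpcs with fewer columns, and induction on the number of columns puts `F` in the convex hull
of the smpcs with at most `n` columns.
-/

open Matrix

section General

variable {κ : Type*} [Fintype κ]

theorem exists_mulVec_eq_zero_of_card_lt {ι : Type*} [Fintype ι] (F : Matrix ι κ ℝ) (S : Finset κ)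
    (h : Fintype.card ι < #S) : ∃ t : κ → ℝ, t ≠ 0 ∧ (∀ j ∉ S, t j = 0) ∧ F *ᵥ t = 0 := by
  classical
  let L : (κ → ℝ) →ₗ[ℝ] (ι → ℝ) × ((Sᶜ : Finset κ) → ℝ) :=
    F.mulVecLin.prod (LinearMap.funLeft ℝ ℝ Subtype.val)
  have hL : LinearMap.ker L ≠ ⊥ := LinearMap.ker_ne_bot_of_finrank_lt <| by
    simp only [Module.finrank_prod, Module.finrank_fintype_fun_eq_card, Fintype.card_coe,
      card_compl]
    have := S.card_le_univ
    omega
  obtain ⟨t, ht, ht0⟩ := (Submodule.ne_bot_iff _).mp hL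
  obtain ⟨hFt, htS⟩ := Prod.ext_iff.mp ht
  exact ⟨t, ht0, fun j hj => congrFun htS ⟨j, mem_compl.mpr hj⟩, hFt⟩

theorem exists_neg_of_dotProduct_eq_zero {t w : κ → ℝ} (hw : 0 ≤ w) (h : t ⬝ᵥ w = 0) {j : κ}
    (htj : t j ≠ 0) (hwj : w j ≠ 0) : ∃ j, t j < 0 := by
  by_contra! ht
  exact mul_ne_zero htj hwj <|
    (sum_eq_zero_iff_of_nonneg fun k _ => mul_nonneg (ht k) (hw k)).mp h j (mem_univ j)

theorem exists_pos_one_add_smul_nonneg_eq_zero {t : κ → ℝ} (h : ∃ j, t j < 0) :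
    ∃ ε : ℝ, 0 < ε ∧ 0 ≤ 1 + ε • t ∧ ∃ j, (1 + ε • t) j = 0 := by
  obtain ⟨j, hj⟩ := h
  obtain ⟨j₀, -, hj₀⟩ := exists_min_image univ t ⟨j, mem_univ j⟩
  have ht₀ : t j₀ < 0 := (hj₀ j (mem_univ j)).trans_lt hj
  refine ⟨-(t j₀)⁻¹, by simpa using ht₀, fun k => ?_, j₀, ?_⟩
  · simpa [field] using (div_le_one_of_neg ht₀).mpr (hj₀ k (mem_univ k))
  · simp [ht₀.ne]

theorem mem_segment_mul_diagonal {ι : Type*} [DecidableEq κ] (M : Matrix ι κ ℝ) (t : κ → ℝ)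
    {ε₁ ε₂ : ℝ} (h₁ : 0 < ε₁) (h₂ : 0 < ε₂) :
    M ∈ segment ℝ (M * diagonal (1 + ε₁ • t)) (M * diagonal (1 + ε₂ • -t)) := by
  refine ⟨ε₂ / (ε₁ + ε₂), ε₁ / (ε₁ + ε₂), by positivity, by positivity, by field_simp; ring, ?_⟩
  ext i j
  simp only [Matrix.add_apply, Matrix.smul_apply, mul_diagonal, Pi.add_apply, Pi.smul_apply,
    Pi.neg_apply, Pi.one_apply, smul_eq_mul]
  field_simp
  ring

section ColSupport

variable {ι : Type*} [Fintype ι] [DecidableEq κ]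

noncomputable def colSupport (p : ι → ℝ) (G : Matrix ι κ ℝ) : Finset κ :=
  univ.filter fun j => (p ᵥ* G) j ≠ 0

theorem vecMul_mul_diagonal (v : ι → ℝ) (M : Matrix ι κ ℝ) (d : κ → ℝ) :
    v ᵥ* (M * diagonal d) = (v ᵥ* M) * d := by
  ext j
  rw [← vecMul_vecMul, vecMul_diagonal, Pi.mul_apply]

theorem card_colSupport_mul_diagonal_lt {p : ι → ℝ} {M : Matrix ι κ ℝ} {d : κ → ℝ} {j : κ}
    (hj : j ∈ colSupport p M) (hdj : d j = 0) :
    #(colSupport p (M * diagonal d)) < #(colSupport p M) := by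
  refine card_lt_card ((ssubset_iff_of_subset fun k hk => ?_).mpr ⟨j, hj, ?_⟩)
  all_goals simp_all [colSupport, vecMul_mul_diagonal]

end ColSupport

end General

section Smpc

variable {n m : ℕ} {p a : Fin n → ℝ} {b : Fin m → ℝ} {F : Matrix (Fin n) (Fin m) ℝ}

/-- An smpc of `(p, a)` onto the atoms `b`; its target masses (the paper's `q`) are `p ᵥ* G`. -/
def IsSmpc (p a : Fin n → ℝ) (b : Fin m → ℝ) (G : Matrix (Fin n) (Fin m) ℝ) : Prop :=
  RowStochastic G ∧ (p * a) ᵥ* G = b * (p ᵥ* G)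

def smallSmpcs (p a : Fin n → ℝ) (b : Fin m → ℝ) : Set (Matrix (Fin n) (Fin m) ℝ) :=
  {G | IsSmpc p a b G ∧ #(colSupport p G) ≤ n}

theorem RowStochastic.mulVec_one (hF : RowStochastic F) : F *ᵥ 1 = 1 := by
  ext i
  simpa [mulVec, dotProduct] using hF.2 i

theorem RowStochastic.mul_diagonal (hF : RowStochastic F) {d : Fin m → ℝ} (hd : 0 ≤ d)
    (hFd : F *ᵥ d = 1) : RowStochastic (F * diagonal d) := by
  refine ⟨fun i j => ?_, fun i => ?_⟩
  · rw [Matrix.mul_diagonal]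
    exact mul_nonneg (hF.1 i j) (hd j)
  · simpa [Matrix.mul_diagonal, mulVec, dotProduct] using congrFun hFd i

theorem IsSmpc.mul_diagonal (hF : IsSmpc p a b F) {d : Fin m → ℝ} (hd : 0 ≤ d)
    (hFd : F *ᵥ d = 1) : IsSmpc p a b (F * diagonal d) := by
  refine ⟨hF.1.mul_diagonal hd hFd, ?_⟩
  rw [vecMul_mul_diagonal, vecMul_mul_diagonal, hF.2, mul_assoc]

theorem IsSmpc.exists_mem_segment_of_card_colSupport_gt (hp : 0 ≤ p) (hF : IsSmpc p a b F)
    (hcard : n < #(colSupport p F)) :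
    ∃ G₁ G₂, IsSmpc p a b G₁ ∧ #(colSupport p G₁) < #(colSupport p F) ∧
      IsSmpc p a b G₂ ∧ #(colSupport p G₂) < #(colSupport p F) ∧ F ∈ segment ℝ G₁ G₂ := by
  obtain ⟨t, ht0, htS, hFt⟩ :=
    exists_mulVec_eq_zero_of_card_lt F (colSupport p F) (by simpa using hcard)
  obtain ⟨j, hjt⟩ := Function.ne_iff.mp ht0
  have hjS : j ∈ colSupport p F := by_contra fun h => hjt (htS j h)
  have hq : 0 ≤ p ᵥ* F := fun k =>
    dotProduct_nonneg_of_nonneg hp fun i => hF.1.1 i k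
  have htq : t ⬝ᵥ (p ᵥ* F) = 0 := by
    rw [dotProduct_comm, ← dotProduct_mulVec, hFt, dotProduct_zero]
  have hqj : (p ᵥ* F) j ≠ 0 := (mem_filter.mp hjS).2
  have hperturb : ∀ c : ℝ, 0 ≤ 1 + c • t → (∃ k, (1 + c • t) k = 0) →
      IsSmpc p a b (F * diagonal (1 + c • t)) ∧
        #(colSupport p (F * diagonal (1 + c • t))) < #(colSupport p F) := by
    rintro c hc ⟨k, hk⟩
    have hkS : k ∈ colSupport p F := by
      by_contra h
      simp [htS k h] at hk
    refine ⟨hF.mul_diagonal hc ?_, card_colSupport_mul_diagonal_lt hkS hk⟩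
    rw [mulVec_add, mulVec_smul, hF.1.mulVec_one, hFt, smul_zero, add_zero]
  obtain ⟨ε₁, hε₁, hc₁, hk₁⟩ := exists_pos_one_add_smul_nonneg_eq_zero
    (exists_neg_of_dotProduct_eq_zero hq htq hjt hqj)
  obtain ⟨ε₂, hε₂, hc₂, hk₂⟩ := exists_pos_one_add_smul_nonneg_eq_zero
    (exists_neg_of_dotProduct_eq_zero hq (by rw [neg_dotProduct, htq, neg_zero])
      (neg_ne_zero.mpr hjt) hqj)
  rw [smul_neg, ← neg_smul] at hc₂ hk₂
  obtain ⟨hG₁, hcard₁⟩ := hperturb ε₁ hc₁ hk₁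
  obtain ⟨hG₂, hcard₂⟩ := hperturb (-ε₂) hc₂ hk₂
  refine ⟨_, _, hG₁, hcard₁, hG₂, hcard₂, ?_⟩
  simpa only [smul_neg, neg_smul] using mem_segment_mul_diagonal F t hε₁ hε₂

theorem IsSmpc.mem_convexHull_smallSmpcs (hp : 0 ≤ p) (hF : IsSmpc p a b F) :
    F ∈ convexHull ℝ (smallSmpcs p a b) := by
  induction hk : #(colSupport p F) using Nat.strong_induction_on generalizing F with
  | _ k ih =>
    by_cases hkn : k ≤ n
    · exact subset_convexHull ℝ _ ⟨hF, hk ▸ hkn⟩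
    obtain ⟨G₁, G₂, hG₁, hcard₁, hG₂, hcard₂, hseg⟩ :=
      hF.exists_mem_segment_of_card_colSupport_gt hp (hk ▸ not_le.mp hkn)
    exact (convex_convexHull ℝ _).segment_subset (ih _ (hk ▸ hcard₁) hG₁ rfl)
      (ih _ (hk ▸ hcard₂) hG₂ rfl) hseg

end Smpc

theorem exists_fin_pos_weights_of_mem_convexHull {E : Type*} [AddCommGroup E] [Module ℝ E]
    {s : Set E} {x : E} (hx : x ∈ convexHull ℝ s) :
    ∃ (K : ℕ) (w : Fin K → ℝ) (z : Fin K → E), (∀ k, 0 < w k) ∧ ∑ k, w k = 1 ∧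
      (∀ k, z k ∈ s) ∧ ∑ k, w k • z k = x := by
  obtain ⟨ι, _, z, w, hzs, -, hw, hw1, rfl⟩ := eq_pos_convex_span_of_mem_convexHull hx
  let e := Fintype.equivFin ι
  refine ⟨Fintype.card ι, w ∘ e.symm, z ∘ e.symm, fun k => hw _, ?_, fun k => hzs ⟨_, rfl⟩, ?_⟩
  · rw [← hw1]; exact e.symm.sum_comp w
  · exact e.symm.sum_comp fun i => w i • z i

theorem smpc_is_mixture_of_small_smpcs_general (n m : ℕ)
    (p : Fin n → ℝ) (hp : ∀ i, 0 < p i)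
    (a : Fin n → ℝ) (q : Fin m → ℝ) (b : Fin m → ℝ)
    (F : Matrix (Fin n) (Fin m) ℝ) (hF : RowStochastic F)
    (hFq : ∀ j, ∑ i, p i * F i j = q j)
    (hFmean : ∀ j, ∑ i, p i * a i * F i j = q j * b j) :
    ∃ (K : ℕ) (α : Fin K → ℝ) (G : Fin K → Matrix (Fin n) (Fin m) ℝ),
      (∀ k, 0 < α k) ∧ (∑ k, α k = 1) ∧
      (∀ k, RowStochastic (G k)) ∧
      (∀ k j, ∑ i, p i * a i * G k i j = b j * ∑ i, p i * G k i j) ∧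
      (∀ k, (univ.filter fun j => ∑ i, p i * G k i j ≠ 0).card ≤ n) ∧
      (∀ i j, F i j = ∑ k, α k * G k i j) ∧
      (∀ j, q j = ∑ k, α k * ∑ i, p i * G k i j) := by
  have hFsmpc : IsSmpc p a b F :=
    ⟨hF, funext fun j => (hFmean j).trans (by rw [Pi.mul_apply, ← hFq j]; exact mul_comm _ _)⟩
  obtain ⟨K, α, G, hα, hα1, hG, rfl⟩ := exists_fin_pos_weights_of_mem_convexHull
    (hFsmpc.mem_convexHull_smallSmpcs fun i => (hp i).le)
  refine ⟨K, α, G, hα, hα1, fun k => (hG k).1.1, fun k => congrFun (hG k).1.2, fun k => (hG k).2,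
    fun i j => by simp [Matrix.sum_apply], fun j => ?_⟩
  rw [← hFq j]
  simp [Matrix.sum_apply, mul_sum, sum_comm (γ := Fin n), mul_left_comm]

theorem smpc_is_mixture_of_small_smpcs (n m : ℕ) (hm : n < m)
    (p : Fin n → ℝ) (hp : ∀ i, 0 < p i) (hp_sum : ∑ i, p i = 1)
    (a : Fin n → ℝ) (ha : StrictMono a)
    (q : Fin m → ℝ) (hq : ∀ j, 0 < q j) (hq_sum : ∑ j, q j = 1)
    (b : Fin m → ℝ) (hb : StrictMono b)
    (F : Matrix (Fin n) (Fin m) ℝ) (hF : RowStochastic F)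
    (hFq : ∀ j, ∑ i, p i * F i j = q j)
    (hFmean : ∀ j, ∑ i, p i * a i * F i j = q j * b j) :
    ∃ (K : ℕ) (α : Fin K → ℝ) (G : Fin K → Matrix (Fin n) (Fin m) ℝ),
      (∀ k, 0 < α k) ∧ (∑ k, α k = 1) ∧
      (∀ k, RowStochastic (G k)) ∧
      (∀ k j, ∑ i, p i * a i * G k i j = b j * ∑ i, p i * G k i j) ∧
      (∀ k, (univ.filter fun j => ∑ i, p i * G k i j ≠ 0).card ≤ n) ∧
      (∀ i j, F i j = ∑ k, α k * G k i j) ∧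
      (∀ j, q j = ∑ k, α k * ∑ i, p i * G k i j) :=
  smpc_is_mixture_of_small_smpcs_general n m p hp a q b F hF hFq hFmean
end
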